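/- arXiv:1403.6609 — 9 statements merged into one kernel-verified Lean document; each statement's English description precedes it below -/
import Mathlib

section
/- With [m]_q = (1-q^m)/(1-q), for every positive integer n: ∑_{j=1}^{n} q^{C(n+1,2) - C(j+1,2)} · [j]_q · [j^2]_q = ([C(n+1,2)]_q)^2, where C(m,2) = m(m-1)/2. -/
/-!
Write `T n = C(n+1, 2)` and `S n` for the left-hand side. Peeling off the term `j = n + 1`
gives the recursion `S (n+1) = q^(n+1) S n + [n+1]_q [(n+1)^2]_q`, and since
`T (n+1) = T n + (n+1)` and `(n+1)^2 = 2 T n + (n+1)`, the squares `[T n]_q ^ 2` satisfy the same recursion by the identity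
`[a+b]_q^2 = q^b [a]_q^2 + [b]_q [2a+b]_q`, i.e.
`(1 - q^(a+b))^2 = q^b (1 - q^a)^2 + (1 - q^b) (1 - q^(2a+b))`.
-/

open Finset

variable {K : Type*} [Field K]

-- At `q = 1` this is the junk value `0 / 0 = 0`, not `m`.
def qInt (q : K) (m : ℕ) : K := (1 - q ^ m) / (1 - q)

theorem qInt_add_sq (q : K) (a b : ℕ) :
    qInt q (a + b) ^ 2 = q ^ b * qInt q a ^ 2 + qInt q b * qInt q (2 * a + b) := by
  simp only [qInt]
  rw [div_pow, div_pow, div_mul_div_comm, ← sq, ← mul_div_assoc, ← add_div]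
  congr 1
  ring

theorem Nat.choose_two_add_two (n : ℕ) : (n + 2).choose 2 = (n + 1).choose 2 + (n + 1) := by
  rw [Nat.choose_succ_succ, Nat.choose_one_right, add_comm]

theorem Nat.add_one_sq_eq_two_mul_choose_two_add (n : ℕ) :
    (n + 1) ^ 2 = 2 * (n + 1).choose 2 + (n + 1) := by
  have := Nat.add_one_mul_choose_eq n 1
  rw [Nat.choose_one_right] at this
  linarith

theorem sum_pow_mul_qInt_mul_qInt_sq (q : K) (n : ℕ) :
    ∑ j ∈ Icc 1 n, q ^ ((n + 1).choose 2 - (j + 1).choose 2) * qInt q j * qInt q (j ^ 2) =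
      qInt q ((n + 1).choose 2) ^ 2 := by
  induction n with
  | zero => simp [qInt]
  | succ n ih =>
    have shift : ∀ j ∈ Icc 1 n, (n + 2).choose 2 - (j + 1).choose 2 =
        (n + 1) + ((n + 1).choose 2 - (j + 1).choose 2) := by
      intro j hj
      have := Nat.choose_le_choose 2 (Nat.add_le_add_right (mem_Icc.mp hj).2 1)
      rw [Nat.choose_two_add_two]
      omega
    rw [sum_Icc_succ_top (by omega), sum_congr rfl fun j hj => by rw [shift j hj, pow_add]]
    simp only [mul_assoc, ← mul_sum]
    simp only [← mul_assoc] at ih ⊢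
    rw [ih, Nat.sub_self, pow_zero, one_mul, Nat.add_one_sq_eq_two_mul_choose_two_add,
      Nat.choose_two_add_two, qInt_add_sq]

theorem q_nicomachus_general (q : ℝ) (n : ℕ) :
    ∑ j ∈ Finset.Icc 1 n,
        q ^ (n * (n + 1) / 2 - j * (j + 1) / 2) *
          ((1 - q ^ j) / (1 - q)) * ((1 - q ^ (j ^ 2)) / (1 - q)) =
      ((1 - q ^ (n * (n + 1) / 2)) / (1 - q)) ^ 2 := by
  have triangle (m : ℕ) : m * (m + 1) / 2 = (m + 1).choose 2 := by
    rw [Nat.choose_two_right, Nat.add_sub_cancel, mul_comm]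
  simp only [triangle]
  exact sum_pow_mul_qInt_mul_qInt_sq q n

theorem q_nicomachus (q : ℝ) (hq : q ≠ 1) (n : ℕ) (hn : 0 < n) :
    ∑ j ∈ Finset.Icc 1 n,
        q ^ (n * (n + 1) / 2 - j * (j + 1) / 2) *
          ((1 - q ^ j) / (1 - q)) * ((1 - q ^ (j ^ 2)) / (1 - q)) =
      ((1 - q ^ (n * (n + 1) / 2)) / (1 - q)) ^ 2 :=
  q_nicomachus_general q n
end

section
/- With [m]_q = (1-q^m)/(1-q), for every positive integer n: ∑_{j=1}^{n} q^{n-j} · [n^2 - n + 2j - 1]_q = [n]_q · [n^2]_q. -/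
open Finset

/- With `j = i + 1` the `j`-th term is `q ^ (n - 1 - i) - q ^ (n ^ 2 + i)`; the two halves sum to
`[n]_q` (reflected) and `q ^ (n ^ 2) [n]_q`. -/
theorem sum_Icc_pow_mul_one_sub_pow_odd {R : Type*} [CommRing R] (q : R) (n : ℕ) :
    ∑ j ∈ Icc 1 n, q ^ (n - j) * (1 - q ^ (n ^ 2 - n + 2 * j - 1)) =
      (∑ i ∈ range n, q ^ i) * (1 - q ^ (n ^ 2)) := by
  have hn : n ≤ n ^ 2 := Nat.le_self_pow two_ne_zero n
  have hterm : ∀ i ∈ range n, q ^ (n - (1 + i)) * (1 - q ^ (n ^ 2 - n + 2 * (1 + i) - 1)) =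
      q ^ (n - 1 - i) - q ^ (n ^ 2) * q ^ i := by
    intro i hi
    have hi : i < n := mem_range.mp hi
    rw [mul_one_sub, ← pow_add, ← pow_add]
    congr 2 <;> omega
  rw [← Ico_add_one_right_eq_Icc, sum_Ico_eq_sum_range, Nat.add_sub_cancel, sum_congr rfl hterm,
    sum_sub_distrib, sum_range_reflect (q ^ ·), ← mul_sum]
  ring

theorem q_wheatstone_general (q : ℝ) (hq : q ≠ 1) (n : ℕ) :
    ∑ j ∈ Finset.Icc 1 n,
        q ^ (n - j) * ((1 - q ^ (n ^ 2 - n + 2 * j - 1)) / (1 - q)) =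
      ((1 - q ^ n) / (1 - q)) * ((1 - q ^ (n ^ 2)) / (1 - q)) := by
  have hq' : 1 - q ≠ 0 := sub_ne_zero.mpr hq.symm
  simp_rw [← mul_div_assoc, ← sum_div, sum_Icc_pow_mul_one_sub_pow_odd, ← geom_sum_mul_neg q n]
  field_simp

theorem q_wheatstone (q : ℝ) (hq : q ≠ 1) (n : ℕ) (hn : 0 < n) :
    ∑ j ∈ Finset.Icc 1 n,
        q ^ (n - j) * ((1 - q ^ (n ^ 2 - n + 2 * j - 1)) / (1 - q)) =
      ((1 - q ^ n) / (1 - q)) * ((1 - q ^ (n ^ 2)) / (1 - q)) :=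
  q_wheatstone_general q hq n
end

section
/- With [m]_q = (1-q^m)/(1-q) and C(m,2) = m(m-1)/2, for every positive integer n: ([C(n+1,2)]_q)^2 - q^n·([C(n,2)]_q)^2 = [n]_q · [n^2]_q. -/
theorem q_identity_nine (q : ℝ) (hq : q ≠ 1) (n : ℕ) (hn : 0 < n) :
    ((1 - q ^ (n * (n + 1) / 2)) / (1 - q)) ^ 2 -
        q ^ n * ((1 - q ^ (n * (n - 1) / 2)) / (1 - q)) ^ 2 =
      ((1 - q ^ n) / (1 - q)) * ((1 - q ^ (n ^ 2)) / (1 - q)) := by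
  obtain ⟨m, rfl⟩ : ∃ m, n = m + 1 := ⟨n - 1, by omega⟩
  have hq' : (1 : ℝ) - q ≠ 0 := by intro h; apply hq; linarith
  have e1 : (m + 1) * (m + 1 + 1) = m * m + 3 * m + 2 := by ring
  have e2 : (m + 1) * (m + 1 - 1) = m * m + m := by simp; ring
  have e3 : (m + 1) ^ 2 = m * m + 2 * m + 1 := by ring
  obtain ⟨k, hk⟩ : Even (m * m + m) := by
    have := Nat.even_mul_succ_self m
    rwa [Nat.mul_succ] at this
  have hA : (m + 1) * (m + 1 + 1) / 2 = (m + 1) * (m + 1 - 1) / 2 + (m + 1) := by rw [e1, e2]; omega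
  have hN : (m + 1) ^ 2 = (m + 1) * (m + 1 - 1) / 2 + ((m + 1) * (m + 1 - 1) / 2 + (m + 1)) := by
    rw [e2, e3]; omega
  rw [hA, hN]
  field_simp
  ring
end

section
/- With [m]_q = (1-q^m)/(1-q) and q-binomial coefficients [m choose 2]_q = [m]_q[m-1]_q/[2]_q, for every positive integer n: [n+1 choose 2]_q^2 - q^{2}·[n choose 2]_q^2 = ([n]_q)^2 · [n]_{q^2}. -/
theorem q_warnaar_diff (q : ℝ) (hq : q ≠ 1) (hq' : q ≠ -1) (n : ℕ) (hn : 0 < n) :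
    ((1 - q ^ (n + 1)) * (1 - q ^ n) / ((1 - q) * (1 - q ^ 2))) ^ 2 -
        q ^ 2 * ((1 - q ^ n) * (1 - q ^ (n - 1)) / ((1 - q) * (1 - q ^ 2))) ^ 2 =
      ((1 - q ^ n) / (1 - q)) ^ 2 * ((1 - q ^ (2 * n)) / (1 - q ^ 2)) := by
  obtain ⟨m, rfl⟩ := Nat.exists_eq_add_of_lt hn
  simp only [Nat.zero_add, Nat.add_sub_cancel]
  have h1 : (1 : ℝ) - q ≠ 0 := sub_ne_zero.mpr (fun h => hq h.symm)
  have h2 : (1 : ℝ) - q ^ 2 ≠ 0 := by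
    intro h
    have : (1 - q) * (1 + q) = 0 := by ring_nf; linarith [h]
    rcases mul_eq_zero.mp this with h' | h'
    · exact h1 h'
    · exact hq' (by linarith)
  field_simp
  ring_nf
end

section
/- With [m]_q = (1-q^m)/(1-q), for all positive integers n and nonnegative integers k: ∑_{j=1}^{n^k} q^{n^k - j} · [n^{k+1} - n^k + 2j - 1]_q = [n^k]_q · [n^{k+1}]_q. -/
/-! Multiplying out, `q ^ (N - j) * (1 - q ^ (M - N + 2 * j - 1)) = q ^ (N - j) - q ^ (M + j - 1)`,
so over `1 ≤ j ≤ N` the first terms run through `1, q, …, q ^ (N - 1)` and the second through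
`q ^ M` times the same powers: the numerator is `(1 - q ^ M) * (1 + q + ⋯ + q ^ (N - 1))`, and the
geometric sum is `[N]_q`. -/

open Finset

section

variable {R : Type*} [Semiring R]

lemma sum_Icc_pow_sub (q : R) (N : ℕ) :
    ∑ j ∈ Icc 1 N, q ^ (N - j) = ∑ i ∈ range N, q ^ i := by
  rw [← Ico_add_one_right_eq_Icc, sum_Ico_eq_sum_range, ← sum_range_reflect]
  refine sum_congr rfl fun i hi => ?_
  rw [mem_range] at hi
  congr 1
  omega

lemma sum_Icc_pow_add_sub_one (q : R) (M N : ℕ) :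
    ∑ j ∈ Icc 1 N, q ^ (M + j - 1) = q ^ M * ∑ i ∈ range N, q ^ i := by
  rw [← Ico_add_one_right_eq_Icc, sum_Ico_eq_sum_range, mul_sum]
  refine sum_congr rfl fun i _ => ?_
  rw [← pow_add]
  congr 1
  omega

end

theorem sum_pow_mul_qNat_eq_qNat_mul_qNat {K : Type*} [Field K] {q : K} (hq : q ≠ 1)
    {N M : ℕ} (hNM : N ≤ M) :
    ∑ j ∈ Icc 1 N, q ^ (N - j) * ((1 - q ^ (M - N + 2 * j - 1)) / (1 - q)) =
      (1 - q ^ N) / (1 - q) * ((1 - q ^ M) / (1 - q)) := by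
  have hsplit : ∀ j ∈ Icc 1 N,
      q ^ (N - j) * ((1 - q ^ (M - N + 2 * j - 1)) / (1 - q)) =
        (q ^ (N - j) - q ^ (M + j - 1)) / (1 - q) := by
    intro j hj
    have hexp : N - j + (M - N + 2 * j - 1) = M + j - 1 := by
      rw [mem_Icc] at hj
      omega
    rw [mul_div_assoc', mul_sub, mul_one, ← pow_add, hexp]
  calc ∑ j ∈ Icc 1 N, q ^ (N - j) * ((1 - q ^ (M - N + 2 * j - 1)) / (1 - q))
      = (1 - q ^ M) * (∑ i ∈ range N, q ^ i) / (1 - q) := by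
        rw [sum_congr rfl hsplit, ← sum_div, sum_sub_distrib, sum_Icc_pow_sub,
          sum_Icc_pow_add_sub_one]
        ring
    _ = (1 - q ^ N) / (1 - q) * ((1 - q ^ M) / (1 - q)) := by
        rw [geom_sum_eq hq, ← neg_div_neg_eq (q ^ N - 1), neg_sub, neg_sub]
        ring

theorem q_luthy (q : ℝ) (hq : q ≠ 1) (n : ℕ) (hn : 0 < n) (k : ℕ) :
    ∑ j ∈ Finset.Icc 1 (n ^ k),
        q ^ (n ^ k - j) * ((1 - q ^ (n ^ (k + 1) - n ^ k + 2 * j - 1)) / (1 - q)) =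
      ((1 - q ^ (n ^ k)) / (1 - q)) * ((1 - q ^ (n ^ (k + 1))) / (1 - q)) :=
  sum_pow_mul_qNat_eq_qNat_mul_qNat hq (Nat.pow_le_pow_right hn k.le_succ)
end

section
/- With [m]_{q^2} = (1-q^{2m})/(1-q^2), for all nonnegative integers n and m: ∑_{k=0}^{n} q^{n-k} · [mn+k]_{q^2} = [n+1 choose 2]_q · [2m+1]_{q^n}, where [n+1 choose 2]_q = [n+1]_q[n]_q/[2]_q and [2m+1]_{q^n} = (1-q^{(2m+1)n})/(1-q^n). -/
open Finset

theorem sum_range_pow_mul_one_sub_pow_eq_geom_sum_mul {R : Type*} [CommRing R] (q : R) (n m : ℕ) :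
    ∑ k ∈ range (n + 1), q ^ (n - k) * (1 - q ^ (2 * (m * n + k))) =
      (∑ k ∈ range (n + 1), q ^ k) * (1 - q ^ ((2 * m + 1) * n)) := by
  have hterm : ∀ k ∈ range (n + 1), q ^ (n - k) * (1 - q ^ (2 * (m * n + k))) =
      q ^ (n - k) - q ^ ((2 * m + 1) * n) * q ^ k := by
    intro k hk
    have hkn : n - k + 2 * (m * n + k) = (2 * m + 1) * n + k := by
      have := mem_range_succ_iff.mp hk
      zify [this]
      ring
    rw [mul_sub, mul_one, ← pow_add, hkn, pow_add]
  have hreflect : ∑ k ∈ range (n + 1), q ^ (n - k) = ∑ k ∈ range (n + 1), q ^ k := by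
    simpa using sum_range_reflect (q ^ ·) (n + 1)
  rw [sum_congr rfl hterm, sum_sub_distrib, ← mul_sum, hreflect]
  ring

theorem q_identity_26_general (q : ℝ) (hq : q ≠ 1) (n m : ℕ)
    (hqn : q ^ n ≠ 1) :
    ∑ k ∈ Finset.range (n + 1),
        q ^ (n - k) * ((1 - q ^ (2 * (m * n + k))) / (1 - q ^ 2)) =
      ((1 - q ^ (n + 1)) * (1 - q ^ n) / ((1 - q) * (1 - q ^ 2))) *
        ((1 - q ^ ((2 * m + 1) * n)) / (1 - q ^ n)) := by
  have hq1 : 1 - q ≠ 0 := sub_ne_zero.mpr hq.symm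
  have hqn1 : 1 - q ^ n ≠ 0 := sub_ne_zero.mpr hqn.symm
  have hgeom : (1 - q ^ (n + 1)) / (1 - q) = ∑ k ∈ range (n + 1), q ^ k := by
    rw [div_eq_iff hq1, geom_sum_mul_neg]
  calc ∑ k ∈ range (n + 1), q ^ (n - k) * ((1 - q ^ (2 * (m * n + k))) / (1 - q ^ 2))
      = (∑ k ∈ range (n + 1), q ^ (n - k) * (1 - q ^ (2 * (m * n + k)))) / (1 - q ^ 2) := by
        simp only [sum_div, mul_div_assoc]
    _ = (∑ k ∈ range (n + 1), q ^ k) * (1 - q ^ ((2 * m + 1) * n)) / (1 - q ^ 2) := by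
        rw [sum_range_pow_mul_one_sub_pow_eq_geom_sum_mul]
    _ = _ := by
        rw [← hgeom]
        field_simp

theorem q_identity_26 (q : ℝ) (hq : q ≠ 1) (hq' : q ≠ -1) (n m : ℕ)
    (hqn : q ^ n ≠ 1) :
    ∑ k ∈ Finset.range (n + 1),
        q ^ (n - k) * ((1 - q ^ (2 * (m * n + k))) / (1 - q ^ 2)) =
      ((1 - q ^ (n + 1)) * (1 - q ^ n) / ((1 - q) * (1 - q ^ 2))) *
        ((1 - q ^ ((2 * m + 1) * n)) / (1 - q ^ n)) :=
  q_identity_26_general q hq n m hqn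
end

section
/- With [m]_{q^2} = (1-q^{2m})/(1-q^2), for every nonnegative integer n: ∑_{j=(3^n+1)/2}^{(3^{n+1}-1)/2} q^{(3^{n+1}-1-2j)/2} · [j]_{q^2} = [3^n]_q · [3^n]_{q^2}. -/
/-!
Write `N = 2m + 1` and shift `j = m + 1 + i` with `0 ≤ i < N`. The `i`-th summand becomes
`(q^(N-1-i) - q^(2N) q^i) / (1 - q²)`, so after reversing the first half the sum is
`(1 - q^(2N)) / (1 - q²)` times the geometric sum `∑_{i<N} q^i = [N]_q`.
-/

open Finset

theorem sum_range_pow_rev_mul_one_sub_pow {R : Type*} [CommRing R] (q : R) (a N : ℕ) :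
    ∑ i ∈ range N, q ^ (N - 1 - i) * (1 - q ^ (2 * (a + i))) =
      (∑ i ∈ range N, q ^ i) * (1 - q ^ (N - 1 + 2 * a)) := by
  have hshift : ∀ i ∈ range N,
      q ^ (N - 1 - i) * q ^ (2 * (a + i)) = q ^ (N - 1 + 2 * a) * q ^ i := by
    intro i hi
    rw [← pow_add, ← pow_add]
    have := mem_range.mp hi
    congr 1
    omega
  simp only [mul_sub, mul_one, sum_sub_distrib, sum_congr rfl hshift, ← mul_sum,
    sum_range_reflect (fun i => q ^ i) N]
  ring

theorem q_wheatstone_of_odd {K : Type*} [Field K] {q : K} (hq : q ≠ 1) {N : ℕ} (hN : Odd N) :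
    ∑ j ∈ Icc ((N + 1) / 2) ((3 * N - 1) / 2),
        q ^ ((3 * N - 1 - 2 * j) / 2) * ((1 - q ^ (2 * j)) / (1 - q ^ 2)) =
      (1 - q ^ N) / (1 - q) * ((1 - q ^ (2 * N)) / (1 - q ^ 2)) := by
  obtain ⟨m, rfl⟩ := hN
  set N := 2 * m + 1
  have hIcc : Icc ((N + 1) / 2) ((3 * N - 1) / 2) = Ico (m + 1) (m + 1 + N) := by
    rw [← Ico_add_one_right_eq_Icc]
    congr 1 <;> omega
  have hterm : ∀ i ∈ range N,
      q ^ ((3 * N - 1 - 2 * (m + 1 + i)) / 2) * ((1 - q ^ (2 * (m + 1 + i))) / (1 - q ^ 2)) =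
        q ^ (N - 1 - i) * (1 - q ^ (2 * (m + 1 + i))) / (1 - q ^ 2) := by
    intro i hi
    have := mem_range.mp hi
    rw [mul_div_assoc]
    congr 3
    omega
  have hgeom : ∑ i ∈ range N, q ^ i = (1 - q ^ N) / (1 - q) := by
    rw [geom_sum_eq hq, ← neg_div_neg_eq, neg_sub, neg_sub]
  rw [hIcc, sum_Ico_eq_sum_range, add_tsub_cancel_left, sum_congr rfl hterm, ← sum_div,
    sum_range_pow_rev_mul_one_sub_pow, hgeom, mul_div_assoc]
  congr 4
  omega

theorem q_wheatstone_29_general (q : ℝ) (hq : q ≠ 1) (n : ℕ) :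
    ∑ j ∈ Finset.Icc ((3 ^ n + 1) / 2) ((3 ^ (n + 1) - 1) / 2),
        q ^ ((3 ^ (n + 1) - 1 - 2 * j) / 2) * ((1 - q ^ (2 * j)) / (1 - q ^ 2)) =
      ((1 - q ^ (3 ^ n)) / (1 - q)) * ((1 - q ^ (2 * 3 ^ n)) / (1 - q ^ 2)) := by
  rw [pow_succ']
  exact q_wheatstone_of_odd hq (Odd.pow (by decide))

theorem q_wheatstone_29 (q : ℝ) (hq : q ≠ 1) (hq' : q ≠ -1) (n : ℕ) :
    ∑ j ∈ Finset.Icc ((3 ^ n + 1) / 2) ((3 ^ (n + 1) - 1) / 2),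
        q ^ ((3 ^ (n + 1) - 1 - 2 * j) / 2) * ((1 - q ^ (2 * j)) / (1 - q ^ 2)) =
      ((1 - q ^ (3 ^ n)) / (1 - q)) * ((1 - q ^ (2 * 3 ^ n)) / (1 - q ^ 2)) :=
  q_wheatstone_29_general q hq n
end

section
/- With [m]_q = (1-q^m)/(1-q), for every positive integer n: ∑_{j=0}^{n-1} q^{n^2-1-(n+1)j} · [2(n+1)j+1]_q = [n^2]_q · [n]_{q^{n+1}}, where [n]_{q^{n+1}} = (1-q^{n(n+1)})/(1-q^{n+1}). -/
/-!
Since `n ^ 2 - 1 = (n + 1) * (n - 1)`, the `j`-th summand times `1 - q` is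
`(q ^ (n + 1)) ^ (n - 1 - j) - q ^ (n ^ 2) * (q ^ (n + 1)) ^ j`. Summing over `j`, both parts are
geometric series in `q ^ (n + 1)` (the first after reversing the order of summation), so the
numerators add up to `(1 - q ^ (n ^ 2)) * [n]_{q ^ (n + 1)}`.
-/

open Finset

theorem Nat.sq_sub_one_sub_succ_mul (n j : ℕ) :
    n ^ 2 - 1 - (n + 1) * j = (n + 1) * (n - 1 - j) := by
  rw [Nat.mul_sub, ← mul_self_tsub_one, sq]

theorem geom_sum_eq_one_sub_div {K : Type*} [DivisionRing K] {x : K} (hx : x ≠ 1) (n : ℕ) :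
    ∑ i ∈ range n, x ^ i = (1 - x ^ n) / (1 - x) :=
  eq_div_of_mul_eq (sub_ne_zero.mpr hx.symm) (geom_sum_mul_neg x n)

section CommRing

variable {R : Type*} [CommRing R]

theorem pow_mul_one_sub_pow_of_lt (q : R) {n j : ℕ} (hj : j < n) :
    (q ^ (n + 1)) ^ (n - 1 - j) * (1 - q ^ (2 * (n + 1) * j + 1)) =
      (q ^ (n + 1)) ^ (n - 1 - j) - q ^ (n ^ 2) * (q ^ (n + 1)) ^ j := by
  obtain ⟨k, rfl⟩ : ∃ k, n = j + k + 1 := ⟨n - j - 1, by omega⟩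
  rw [show j + k + 1 - 1 - j = k by omega]
  ring

theorem sum_pow_mul_one_sub_pow (q : R) (n : ℕ) :
    ∑ j ∈ range n, q ^ (n ^ 2 - 1 - (n + 1) * j) * (1 - q ^ (2 * (n + 1) * j + 1)) =
      (1 - q ^ (n ^ 2)) * ∑ j ∈ range n, (q ^ (n + 1)) ^ j := by
  have hterm : ∀ j ∈ range n,
      q ^ (n ^ 2 - 1 - (n + 1) * j) * (1 - q ^ (2 * (n + 1) * j + 1)) =
        (q ^ (n + 1)) ^ (n - 1 - j) - q ^ (n ^ 2) * (q ^ (n + 1)) ^ j := fun j hj => by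
    rw [Nat.sq_sub_one_sub_succ_mul, pow_mul, pow_mul_one_sub_pow_of_lt q (mem_range.mp hj)]
  rw [sum_congr rfl hterm, sum_sub_distrib, ← mul_sum,
    sum_range_reflect (fun j => (q ^ (n + 1)) ^ j) n, sub_mul, one_mul]

end CommRing

theorem q_identity_32_general (q : ℝ) (n : ℕ)
    (hqn : q ^ (n + 1) ≠ 1) :
    ∑ j ∈ Finset.range n,
        q ^ (n ^ 2 - 1 - (n + 1) * j) * ((1 - q ^ (2 * (n + 1) * j + 1)) / (1 - q)) =
      ((1 - q ^ (n ^ 2)) / (1 - q)) * ((1 - q ^ (n * (n + 1))) / (1 - q ^ (n + 1))) := by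
  simp_rw [mul_div_assoc', ← sum_div]
  rw [sum_pow_mul_one_sub_pow, geom_sum_eq_one_sub_div hqn, ← pow_mul, mul_comm (n + 1) n]
  ring

theorem q_identity_32 (q : ℝ) (hq : q ≠ 1) (n : ℕ) (hn : 0 < n)
    (hqn : q ^ (n + 1) ≠ 1) :
    ∑ j ∈ Finset.range n,
        q ^ (n ^ 2 - 1 - (n + 1) * j) * ((1 - q ^ (2 * (n + 1) * j + 1)) / (1 - q)) =
      ((1 - q ^ (n ^ 2)) / (1 - q)) * ((1 - q ^ (n * (n + 1))) / (1 - q ^ (n + 1))) :=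
  q_identity_32_general q n hqn
end

section
/- With [m]_q = (1-q^m)/(1-q), for all positive integers n and m: ∑_{k=0}^{n-1} q^{n^m(n-1) - k·n^m} · [(2k+1)·n^m]_q = [n^{m+1}]_q · [n]_{q^{n^m}}. -/
/-!
Put `x = q ^ (n ^ m)`. The `k`-th summand is `(x ^ (n - 1 - k) - x ^ (n + k)) / (1 - q)`, so the sum
splits into the geometric sum `∑_{k<n} x ^ k`, read backwards, minus `x ^ n` times the same sum.
Hence `(1 - q)` times the left side is `(1 - x ^ n) [n]_x`, which is `[n ^ (m + 1)]_q (1 - q)`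
times `[n]_x`.
-/

open Finset

theorem sum_pow_mul_one_sub_pow_two_mul_add_one {R : Type*} [CommRing R] (x : R) (n : ℕ) :
    ∑ k ∈ range n, x ^ (n - 1 - k) * (1 - x ^ (2 * k + 1)) =
      (1 - x ^ n) * ∑ k ∈ range n, x ^ k := by
  have hsummand : ∀ k ∈ range n,
      x ^ (n - 1 - k) * (1 - x ^ (2 * k + 1)) = x ^ (n - 1 - k) - x ^ n * x ^ k := by
    intro k hk
    have hexp : n - 1 - k + (2 * k + 1) = n + k := by
      have := mem_range.mp hk
      omega
    rw [mul_sub, mul_one, ← pow_add, hexp, pow_add]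
  rw [sum_congr rfl hsummand, sum_sub_distrib, sum_range_reflect (x ^ ·) n, ← mul_sum, sub_mul,
    one_mul]

theorem one_sub_pow_mul_geom_sum {K : Type*} [Field K] (x : K) (n : ℕ) :
    (1 - x ^ n) * ∑ k ∈ range n, x ^ k = (1 - x ^ n) * ((1 - x ^ n) / (1 - x)) := by
  rcases eq_or_ne x 1 with rfl | hx
  · simp
  · rw [← mul_neg_geom_sum x n, mul_div_cancel_left₀ _ (sub_ne_zero.mpr hx.symm)]

theorem q_identity_34_general (q : ℝ) (n m : ℕ) :
    ∑ k ∈ Finset.range n,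
        q ^ (n ^ m * (n - 1) - k * n ^ m) * ((1 - q ^ ((2 * k + 1) * n ^ m)) / (1 - q)) =
      ((1 - q ^ (n ^ (m + 1))) / (1 - q)) * ((1 - q ^ (n * n ^ m)) / (1 - q ^ (n ^ m))) := by
  set x := q ^ n ^ m
  have hsummand : ∀ k ∈ range n,
      q ^ (n ^ m * (n - 1) - k * n ^ m) * ((1 - q ^ ((2 * k + 1) * n ^ m)) / (1 - q)) =
        x ^ (n - 1 - k) * (1 - x ^ (2 * k + 1)) / (1 - q) := by
    intro k _
    rw [mul_comm (n ^ m), ← Nat.sub_mul, pow_mul', pow_mul', mul_div_assoc]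
  have hpow : q ^ (n ^ (m + 1)) = x ^ n := by rw [pow_succ', pow_mul']
  have hpow' : q ^ (n * n ^ m) = x ^ n := pow_mul' q n (n ^ m)
  rw [sum_congr rfl hsummand, ← sum_div, sum_pow_mul_one_sub_pow_two_mul_add_one,
    one_sub_pow_mul_geom_sum, hpow, hpow']
  ring

theorem q_identity_34 (q : ℝ) (hq : q ≠ 1) (n m : ℕ) (hn : 0 < n) (hm : 0 < m)
    (hqn : q ^ (n ^ m) ≠ 1) :
    ∑ k ∈ Finset.range n,
        q ^ (n ^ m * (n - 1) - k * n ^ m) * ((1 - q ^ ((2 * k + 1) * n ^ m)) / (1 - q)) =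
      ((1 - q ^ (n ^ (m + 1))) / (1 - q)) * ((1 - q ^ (n * n ^ m)) / (1 - q ^ (n ^ m))) :=
  q_identity_34_general q n m
end
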